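/- arXiv:math/0610589 — 2 statements merged into one kernel-verified Lean document; each statement's English description precedes it below -/
import Mathlib

section
/- Let N ≥ 2 and let f : ℂ → ℂ^N be the Veronese map. Then for every integer k with 0 ≤ k ≤ N−1 and every ζ ∈ ℂ, the iterate P₊^k f is defined and |P₊^k f(ζ)|² = (k!)² · C(N−1, k) · (1 + |ζ|²)^{N−1−2k}, where P₊⁰f = f. In particular |f(ζ)|² = (1 + |ζ|²)^{N−1}, all the norms |P₊^k f|² are constant multiples of powers of (1 + |ζ|²), and the successive powers decrease by 2. -/
open Complex Matrix

/-- Wirtinger derivative ∂ = (∂/∂ζ₁ − i ∂/∂ζ₂)/2 of a map ℂ → ℂ. -/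
noncomputable def wD (f : ℂ → ℂ) (z : ℂ) : ℂ :=
  (fderiv ℝ f z 1 - Complex.I * fderiv ℝ f z Complex.I) / 2

/-- Anti-Wirtinger derivative ∂̄ = (∂/∂ζ₁ + i ∂/∂ζ₂)/2 of a map ℂ → ℂ. -/
noncomputable def wDbar (f : ℂ → ℂ) (z : ℂ) : ℂ :=
  (fderiv ℝ f z 1 + Complex.I * fderiv ℝ f z Complex.I) / 2

/-- Componentwise Wirtinger derivative for vector-valued maps. -/
noncomputable def wDV {N : ℕ} (f : ℂ → Fin N → ℂ) (z : ℂ) : Fin N → ℂ :=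
  fun i => wD (fun w => f w i) z

/-- Componentwise anti-Wirtinger derivative for vector-valued maps. -/
noncomputable def wDbarV {N : ℕ} (f : ℂ → Fin N → ℂ) (z : ℂ) : Fin N → ℂ :=
  fun i => wDbar (fun w => f w i) z

/-- Hermitian inner product a†·b = Σᵢ āᵢ bᵢ on ℂ^N. -/
noncomputable def herm {N : ℕ} (a b : Fin N → ℂ) : ℂ :=
  ∑ i, (starRingEnd ℂ) (a i) * b i

/-- Squared norm |a|² as a real number. -/
noncomputable def nsq {N : ℕ} (a : Fin N → ℂ) : ℝ :=
  ∑ i, Complex.normSq (a i)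

/-- The operator P₊ g = ∂g − g (g†·∂g)/|g|². -/
noncomputable def Pp {N : ℕ} (g : ℂ → Fin N → ℂ) : ℂ → Fin N → ℂ :=
  fun z i => wDV g z i - g z i * (herm (g z) (wDV g z) / herm (g z) (g z))

/-- Iterates of P₊ : P₊⁰ g = g, P₊^{k+1} g = P₊ (P₊^k g). -/
noncomputable def PpIter {N : ℕ} (g : ℂ → Fin N → ℂ) : ℕ → (ℂ → Fin N → ℂ)
  | 0 => g
  | k + 1 => Pp (PpIter g k)

/-- The projector P(V) = V ⊗ V† / |V|². -/
noncomputable def proj {N : ℕ} (V : ℂ → Fin N → ℂ) (z : ℂ) : Matrix (Fin N) (Fin N) ℂ :=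
  fun i j => V z i * (starRingEnd ℂ) (V z j) / herm (V z) (V z)

/-- Entrywise Wirtinger derivative for matrix-valued maps. -/
noncomputable def wDM {N : ℕ} (M : ℂ → Matrix (Fin N) (Fin N) ℂ) (z : ℂ) :
    Matrix (Fin N) (Fin N) ℂ :=
  fun i j => wD (fun w => M w i j) z

/-- Entrywise anti-Wirtinger derivative for matrix-valued maps. -/
noncomputable def wDbarM {N : ℕ} (M : ℂ → Matrix (Fin N) (Fin N) ℂ) (z : ℂ) :
    Matrix (Fin N) (Fin N) ℂ :=
  fun i j => wDbar (fun w => M w i j) z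

lemma wD_const (c : ℂ) (z : ℂ) : wD (fun _ => c) z = 0 := by
  simp [wD, fderiv_const]

lemma wDbar_const (c : ℂ) (z : ℂ) : wDbar (fun _ => c) z = 0 := by
  simp [wDbar, fderiv_const]

lemma wD_mul {f g : ℂ → ℂ} {z : ℂ} (hf : DifferentiableAt ℝ f z) (hg : DifferentiableAt ℝ g z) :
    wD (fun w => f w * g w) z = f z * wD g z + g z * wD f z := by
  unfold wD
  rw [fderiv_fun_mul hf hg]
  simp only [ContinuousLinearMap.add_apply, ContinuousLinearMap.smul_apply, smul_eq_mul]
  ring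

lemma wDbar_mul {f g : ℂ → ℂ} {z : ℂ} (hf : DifferentiableAt ℝ f z) (hg : DifferentiableAt ℝ g z) :
    wDbar (fun w => f w * g w) z = f z * wDbar g z + g z * wDbar f z := by
  unfold wDbar
  rw [fderiv_fun_mul hf hg]
  simp only [ContinuousLinearMap.add_apply, ContinuousLinearMap.smul_apply, smul_eq_mul]
  ring

lemma wD_sum {ι : Type*} {s : Finset ι} {f : ι → ℂ → ℂ} {z : ℂ}
    (h : ∀ i ∈ s, DifferentiableAt ℝ (f i) z) :
    wD (fun w => ∑ i ∈ s, f i w) z = ∑ i ∈ s, wD (f i) z := by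
  unfold wD
  rw [fderiv_fun_sum h]
  simp only [ContinuousLinearMap.coe_sum', Finset.sum_apply]
  rw [Finset.mul_sum, ← Finset.sum_sub_distrib, ← Finset.sum_div]

lemma wDbar_sum {ι : Type*} {s : Finset ι} {f : ι → ℂ → ℂ} {z : ℂ}
    (h : ∀ i ∈ s, DifferentiableAt ℝ (f i) z) :
    wDbar (fun w => ∑ i ∈ s, f i w) z = ∑ i ∈ s, wDbar (f i) z := by
  unfold wDbar
  rw [fderiv_fun_sum h]
  simp only [ContinuousLinearMap.coe_sum', Finset.sum_apply]
  rw [Finset.mul_sum, ← Finset.sum_add_distrib, ← Finset.sum_div]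

lemma wD_comp {g : ℂ → ℂ} {d : ℂ} {t : ℂ → ℂ} {z : ℂ}
    (hg : HasDerivAt g d (t z)) (ht : DifferentiableAt ℝ t z) :
    wD (fun w => g (t w)) z = d * wD t z := by
  have h := ((hg.hasFDerivAt.restrictScalars ℝ).comp z ht.hasFDerivAt).fderiv
  unfold wD
  rw [show (fun w => g (t w)) = g ∘ t from rfl, h]
  simp only [ContinuousLinearMap.coe_comp', Function.comp_apply,
    ContinuousLinearMap.coe_restrictScalars', ContinuousLinearMap.smulRight_apply,
    ContinuousLinearMap.one_apply, ContinuousLinearMap.toSpanSingleton_apply, smul_eq_mul]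
  ring

lemma wDbar_comp {g : ℂ → ℂ} {d : ℂ} {t : ℂ → ℂ} {z : ℂ}
    (hg : HasDerivAt g d (t z)) (ht : DifferentiableAt ℝ t z) :
    wDbar (fun w => g (t w)) z = d * wDbar t z := by
  have h := ((hg.hasFDerivAt.restrictScalars ℝ).comp z ht.hasFDerivAt).fderiv
  unfold wDbar
  rw [show (fun w => g (t w)) = g ∘ t from rfl, h]
  simp only [ContinuousLinearMap.coe_comp', Function.comp_apply,
    ContinuousLinearMap.coe_restrictScalars', ContinuousLinearMap.smulRight_apply,
    ContinuousLinearMap.one_apply, ContinuousLinearMap.toSpanSingleton_apply, smul_eq_mul]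
  ring

lemma fderiv_conj (z : ℂ) : fderiv ℝ (fun w : ℂ => (starRingEnd ℂ) w) z
    = Complex.conjCLE.toContinuousLinearMap := by
  rw [show (fun w : ℂ => (starRingEnd ℂ) w) = ⇑Complex.conjCLE from rfl, Complex.conjCLE.fderiv]

lemma diff_conj (z : ℂ) : DifferentiableAt ℝ (fun w : ℂ => (starRingEnd ℂ) w) z :=
  Complex.conjCLE.differentiable.differentiableAt

lemma wD_conj (z : ℂ) : wD (fun w => (starRingEnd ℂ) w) z = 0 := by
  unfold wD; rw [fderiv_conj]
  simp [Complex.conjCLE_apply, Complex.conj_I]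

lemma wDbar_conj (z : ℂ) : wDbar (fun w => (starRingEnd ℂ) w) z = 1 := by
  unfold wDbar; rw [fderiv_conj]
  simp [Complex.conjCLE_apply, Complex.conj_I]

lemma wD_conj_comp {f : ℂ → ℂ} {z : ℂ} (hf : DifferentiableAt ℝ f z) :
    wD (fun w => (starRingEnd ℂ) (f w)) z = (starRingEnd ℂ) (wDbar f z) := by
  have h := (Complex.conjCLE.hasFDerivAt.comp z hf.hasFDerivAt).fderiv
  unfold wD wDbar
  rw [show (fun w => (starRingEnd ℂ) (f w)) = ⇑Complex.conjCLE ∘ f from rfl, h]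
  simp only [ContinuousLinearMap.coe_comp', Function.comp_apply,
    ContinuousLinearEquiv.coe_coe, Complex.conjCLE_apply, map_div₀, map_add, _root_.map_mul,
    Complex.conj_I, map_ofNat]
  ring

lemma wD_id (z : ℂ) : wD (fun w => w) z = 1 := by
  have h := ((hasDerivAt_id z).hasFDerivAt (f := fun w : ℂ => w).restrictScalars ℝ).fderiv
  unfold wD
  rw [h]
  simp only [ContinuousLinearMap.coe_restrictScalars', ContinuousLinearMap.smulRight_apply,
    ContinuousLinearMap.one_apply, smul_eq_mul]
  ring_nf
  simp [Complex.I_sq]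
  ring

lemma wDbar_id (z : ℂ) : wDbar (fun w => w) z = 0 := by
  have h := ((hasDerivAt_id z).hasFDerivAt (f := fun w : ℂ => w).restrictScalars ℝ).fderiv
  unfold wDbar
  rw [h]
  simp only [ContinuousLinearMap.coe_restrictScalars', ContinuousLinearMap.smulRight_apply,
    ContinuousLinearMap.one_apply, smul_eq_mul]
  ring_nf
  simp [Complex.I_sq]
lemma diff_pow (a : ℕ) (z : ℂ) : DifferentiableAt ℝ (fun w : ℂ => w ^ a) z :=
  (differentiableAt_id.pow a)

lemma diff_conj_pow (b : ℕ) (z : ℂ) : DifferentiableAt ℝ (fun w : ℂ => (starRingEnd ℂ) w ^ b) z :=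
  (diff_conj z).pow b

lemma diff_mono (a b : ℕ) (z : ℂ) :
    DifferentiableAt ℝ (fun w : ℂ => w ^ a * (starRingEnd ℂ) w ^ b) z :=
  (diff_pow a z).mul (diff_conj_pow b z)

lemma wD_pow (a : ℕ) (z : ℂ) : wD (fun w : ℂ => w ^ a) z = a * z ^ (a - 1) := by
  have := wD_comp (t := fun w : ℂ => w) (hasDerivAt_pow a z) differentiable_id.differentiableAt
  simpa [wD_id] using this

lemma wDbar_pow (a : ℕ) (z : ℂ) : wDbar (fun w : ℂ => w ^ a) z = 0 := by
  have := wDbar_comp (t := fun w : ℂ => w) (hasDerivAt_pow a z) differentiable_id.differentiableAt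
  simpa [wDbar_id] using this

lemma wD_conj_pow (b : ℕ) (z : ℂ) : wD (fun w : ℂ => (starRingEnd ℂ) w ^ b) z = 0 := by
  have := wD_comp (t := fun w : ℂ => (starRingEnd ℂ) w)
    (hasDerivAt_pow b ((starRingEnd ℂ) z)) (diff_conj z)
  simpa [wD_conj] using this

lemma wDbar_conj_pow (b : ℕ) (z : ℂ) :
    wDbar (fun w : ℂ => (starRingEnd ℂ) w ^ b) z = b * (starRingEnd ℂ) z ^ (b - 1) := by
  have := wDbar_comp (t := fun w : ℂ => (starRingEnd ℂ) w)
    (hasDerivAt_pow b ((starRingEnd ℂ) z)) (diff_conj z)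
  simpa [wDbar_conj] using this

lemma wD_mono (a b : ℕ) (z : ℂ) :
    wD (fun w : ℂ => w ^ a * (starRingEnd ℂ) w ^ b) z
      = (a : ℂ) * z ^ (a - 1) * (starRingEnd ℂ) z ^ b := by
  rw [wD_mul (diff_pow a z) (diff_conj_pow b z), wD_pow, wD_conj_pow]
  ring

lemma wDbar_mono (a b : ℕ) (z : ℂ) :
    wDbar (fun w : ℂ => w ^ a * (starRingEnd ℂ) w ^ b) z
      = z ^ a * ((b : ℂ) * (starRingEnd ℂ) z ^ (b - 1)) := by
  rw [wDbar_mul (diff_pow a z) (diff_conj_pow b z), wDbar_pow, wDbar_conj_pow]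
  ring

/-- The polynomial `S_{p,j}` (components of the Veronese harmonic sequence, up to factors). -/
noncomputable def Sv (n p j : ℕ) (z : ℂ) : ℂ :=
  ∑ k ∈ Finset.range (p+1), (-1 : ℂ) ^ k * ((n-j).choose k : ℂ) * ((j.choose (p-k)) : ℂ) *
    (z ^ (j-(p-k)) * (starRingEnd ℂ) z ^ k)

/-- `∂ S_{p,j}`. -/
noncomputable def DSv (n p j : ℕ) (z : ℂ) : ℂ :=
  ∑ k ∈ Finset.range (p+1), (-1 : ℂ) ^ k * ((n-j).choose k : ℂ) * ((j.choose (p-k)) : ℂ) *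
    (((j-(p-k) : ℕ) : ℂ) * z ^ (j-(p-k)-1) * (starRingEnd ℂ) z ^ k)

/-- `∂̄ S_{p,j}`. -/
noncomputable def DbSv (n p j : ℕ) (z : ℂ) : ℂ :=
  ∑ k ∈ Finset.range (p+1), (-1 : ℂ) ^ k * ((n-j).choose k : ℂ) * ((j.choose (p-k)) : ℂ) *
    (z ^ (j-(p-k)) * ((k : ℂ) * (starRingEnd ℂ) z ^ (k-1)))

lemma diff_Sv (n p j : ℕ) (z : ℂ) : DifferentiableAt ℝ (Sv n p j) z := by
  unfold Sv
  exact DifferentiableAt.fun_sum fun k _ => ((diff_mono _ _ z).const_mul _)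

lemma wD_Sv (n p j : ℕ) (z : ℂ) : wD (Sv n p j) z = DSv n p j z := by
  unfold Sv DSv
  rw [wD_sum (fun k _ => (diff_mono _ _ z).const_mul _)]
  refine Finset.sum_congr rfl fun k _ => ?_
  have h1 : wD (fun w => (-1 : ℂ) ^ k * ((n-j).choose k : ℂ) * ((j.choose (p-k)) : ℂ) *
      (w ^ (j-(p-k)) * (starRingEnd ℂ) w ^ k)) z
      = (-1 : ℂ) ^ k * ((n-j).choose k : ℂ) * ((j.choose (p-k)) : ℂ) *
        wD (fun w => w ^ (j-(p-k)) * (starRingEnd ℂ) w ^ k) z := by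
    rw [wD_mul (differentiableAt_const _) (diff_mono _ _ z), wD_const]
    ring
  rw [h1, wD_mono]

lemma wDbar_Sv (n p j : ℕ) (z : ℂ) : wDbar (Sv n p j) z = DbSv n p j z := by
  unfold Sv DbSv
  rw [wDbar_sum (fun k _ => (diff_mono _ _ z).const_mul _)]
  refine Finset.sum_congr rfl fun k _ => ?_
  have h1 : wDbar (fun w => (-1 : ℂ) ^ k * ((n-j).choose k : ℂ) * ((j.choose (p-k)) : ℂ) *
      (w ^ (j-(p-k)) * (starRingEnd ℂ) w ^ k)) z
      = (-1 : ℂ) ^ k * ((n-j).choose k : ℂ) * ((j.choose (p-k)) : ℂ) *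
        wDbar (fun w => w ^ (j-(p-k)) * (starRingEnd ℂ) w ^ k) z := by
    rw [wDbar_mul (differentiableAt_const _) (diff_mono _ _ z), wDbar_const]
    ring
  rw [h1, wDbar_mono]

lemma Sv_zero (n j : ℕ) (z : ℂ) : Sv n 0 j z = z ^ j := by
  simp [Sv]

lemma DbSv_zero (n j : ℕ) (z : ℂ) : DbSv n 0 j z = 0 := by
  simp [DbSv]
lemma sum_shape {P Q R : ℕ → ℂ} {p : ℕ}
    (h0 : P 0 = Q 0) (htop : P (p+1) = R p) (hmid : ∀ k, k < p → P (k+1) = Q (k+1) + R k) :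
    ∑ k ∈ Finset.range (p+2), P k
      = ∑ k ∈ Finset.range (p+1), Q k + ∑ k ∈ Finset.range (p+1), R k := by
  rw [Finset.sum_range_succ' P (p+1), Finset.sum_range_succ (fun k => P (k+1)) p,
      Finset.sum_range_succ' Q p, Finset.sum_range_succ R p]
  have h : ∑ k ∈ Finset.range p, P (k+1) = ∑ k ∈ Finset.range p, (Q (k+1) + R k) :=
    Finset.sum_congr rfl (fun k hk => hmid k (Finset.mem_range.mp hk))
  rw [h, Finset.sum_add_distrib, h0, htop]
  ring

lemma hep (e : ℕ) (z : ℂ) : (e : ℂ) * z ^ (e-1) * z = (e : ℂ) * z ^ e := by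
  cases e with
  | zero => simp
  | succ m => simp [pow_succ]; ring

/-- coefficient in `Sv` -/
noncomputable def av (n p j k : ℕ) : ℂ :=
  (-1 : ℂ) ^ k * ((n-j).choose k : ℂ) * ((j.choose (p-k)) : ℂ)

lemma Sv_eq_av (n p j : ℕ) (z : ℂ) :
    Sv n p j z = ∑ k ∈ Finset.range (p+1), av n p j k * (z ^ (j-(p-k)) * (starRingEnd ℂ) z ^ k) :=
  rfl

lemma DSv_eq_av (n p j : ℕ) (z : ℂ) :
    DSv n p j z = ∑ k ∈ Finset.range (p+1),
      av n p j k * (((j-(p-k) : ℕ) : ℂ) * z ^ (j-(p-k)-1) * (starRingEnd ℂ) z ^ k) := by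
  unfold DSv av
  refine Finset.sum_congr rfl fun k _ => by ring

lemma DbSv_eq_av (n p j : ℕ) (z : ℂ) :
    DbSv n p j z = ∑ k ∈ Finset.range (p+1),
      av n p j k * (z ^ (j-(p-k)) * ((k : ℂ) * (starRingEnd ℂ) z ^ (k-1))) :=
  rfl

-- scalar binomial facts, cast to ℂ
lemma cast_choose_right (m k : ℕ) :
    ((m.choose (k+1) : ℂ)) * (k+1) = (m.choose k : ℂ) * ((m : ℕ) - k : ℕ) := by
  exact_mod_cast congrArg (Nat.cast : ℕ → ℂ) (Nat.choose_succ_right_eq m k)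
lemma R1_zero (n p j : ℕ) (z c : ℂ) :
    ((p:ℂ)+1) * (av n (p+1) j 0 * (z ^ (j-(p+1-0)) * c ^ 0))
      = av n p j 0 * (((j-(p-0) : ℕ) : ℂ) * z ^ (j-(p-0)-1) * c ^ 0) := by
  simp only [Nat.sub_zero, av, pow_zero, Nat.choose_zero_right, Nat.cast_one]
  have h := cast_choose_right j p
  have he : j - p - 1 = j - (p+1) := by omega
  rw [he]
  linear_combination z ^ (j-(p+1)) * h

lemma R1_top (n p j : ℕ) (hj : j ≤ n) (z c : ℂ) :
    ((p:ℂ)+1) * (av n (p+1) j (p+1) * (z ^ (j-(p+1-(p+1))) * c ^ (p+1)))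
      = (av n p j p * (((j-(p-p) : ℕ) : ℂ) * z ^ (j-(p-p)-1) * c ^ p)) * (z * c)
        - ((n:ℂ) - (p:ℂ)) * c * (av n p j p * (z ^ (j-(p-p)) * c ^ p)) := by
  simp only [Nat.sub_self, Nat.sub_zero, av, Nat.choose_self, Nat.cast_one, mul_one]
  have hz := hep j z
  have f2 := cast_choose_right (n-j) p
  rcases le_or_gt p (n-j) with h2 | h2
  · have hG : (((n-j) - p : ℕ) : ℂ) = (n:ℂ) - (j:ℂ) - (p:ℂ) := by
      push_cast [Nat.cast_sub h2, Nat.cast_sub hj]; ring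
    rw [hG] at f2
    have hs : (-1:ℂ)^(p+1) = -(-1:ℂ)^p := by rw [pow_succ]; ring
    rw [hs]
    have h0 : ((j.choose 0 : ℕ) : ℂ) = 1 := by simp
    linear_combination (-(-1:ℂ)^p * c^(p+1) * ((n-j).choose p : ℂ) * ((j.choose 0 : ℕ):ℂ)) * hz
      + (-(-1:ℂ)^p * c^(p+1) * z^j * ((j.choose 0 : ℕ):ℂ)) * f2
  · have e1 : (n-j).choose (p+1) = 0 := Nat.choose_eq_zero_of_lt (by omega)
    have e2 : (n-j).choose p = 0 := Nat.choose_eq_zero_of_lt h2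
    rw [e1, e2]
    push_cast
    ring

lemma R1_mid (n p j k : ℕ) (hj : j ≤ n) (hk : k < p) (z c : ℂ) :
    ((p:ℂ)+1) * (av n (p+1) j (k+1) * (z ^ (j-(p+1-(k+1))) * c ^ (k+1)))
      = av n p j (k+1) * (((j-(p-(k+1)) : ℕ) : ℂ) * z ^ (j-(p-(k+1))-1) * c ^ (k+1))
        + ((av n p j k * (((j-(p-k) : ℕ) : ℂ) * z ^ (j-(p-k)-1) * c ^ k)) * (z * c)
          - ((n:ℂ) - (p:ℂ)) * c * (av n p j k * (z ^ (j-(p-k)) * c ^ k))) := by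
  obtain ⟨d, hd⟩ : ∃ d, p - k = d + 1 := ⟨p - k - 1, by omega⟩
  have h1 : p + 1 - (k+1) = d + 1 := by omega
  have h2 : p - (k+1) = d := by omega
  have h3 : j - d - 1 = j - (d+1) := by omega
  have h4 : j - (p+1-(k+1)) = j - (d+1) := by omega
  have h5 : (p+1) - (k+1) = d + 1 := by omega
  simp only [av, hd, h1, h2, h4]
  rw [h3]
  have hPc : (p:ℂ) = (k:ℂ) + (d:ℂ) + 1 := by
    have : p = k + d + 1 := by omega
    exact_mod_cast congrArg (Nat.cast : ℕ → ℂ) this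
  have hs : (-1:ℂ)^(k+1) = -(-1:ℂ)^k := by rw [pow_succ]; ring
  rw [hs, hPc]
  have f1 := cast_choose_right j d
  rcases le_or_gt (d+1) j with hdj | hdj
  · have hE : ((j - (d+1) : ℕ) : ℂ) = (j:ℂ) - (d:ℂ) - 1 := by
      rw [Nat.cast_sub hdj]; push_cast; ring
    have hF : ((j - d : ℕ) : ℂ) = (j:ℂ) - (d:ℂ) := by
      rw [Nat.cast_sub (by omega)]
    have hz := hep (j - (d+1)) z
    rw [hE] at hz
    rw [hF] at f1
    rw [hE, hF]
    have f2 := cast_choose_right (n-j) k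
    rcases le_or_gt k (n-j) with hkm | hkm
    · have hG : (((n-j) - k : ℕ) : ℂ) = (n:ℂ) - (j:ℂ) - (k:ℂ) := by
        rw [Nat.cast_sub hkm, Nat.cast_sub hj]
      rw [hG] at f2
      linear_combination (-(-1:ℂ)^k * c^(k+1) * ((n-j).choose k : ℂ) * (j.choose (d+1) : ℂ)) * hz
        + (-(-1:ℂ)^k * c^(k+1) * z^(j-(d+1)) * (j.choose (d+1) : ℂ)) * f2
        + (-(-1:ℂ)^k * c^(k+1) * z^(j-(d+1)) * ((n-j).choose (k+1) : ℂ)) * f1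
    · have e1 : (n-j).choose (k+1) = 0 := Nat.choose_eq_zero_of_lt (by omega)
      have e2 : (n-j).choose k = 0 := Nat.choose_eq_zero_of_lt hkm
      rw [e1, e2]
      push_cast
      ring
  · have e1 : j.choose (d+1) = 0 := Nat.choose_eq_zero_of_lt hdj
    have e2 : j - d = 0 := by omega
    rw [e1, e2]
    push_cast
    ring
lemma R1 (n p j : ℕ) (hj : j ≤ n) (z : ℂ) :
    ((p:ℂ)+1) * Sv n (p+1) j z
      = (1 + z * (starRingEnd ℂ) z) * DSv n p j z
        - ((n:ℂ) - (p:ℂ)) * (starRingEnd ℂ) z * Sv n p j z := by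
  set c := (starRingEnd ℂ) z with hc
  have key := sum_shape
      (P := fun k => ((p:ℂ)+1) * (av n (p+1) j k * (z ^ (j-(p+1-k)) * c ^ k)))
      (Q := fun k => av n p j k * (((j-(p-k) : ℕ) : ℂ) * z ^ (j-(p-k)-1) * c ^ k))
      (R := fun k => (av n p j k * (((j-(p-k) : ℕ) : ℂ) * z ^ (j-(p-k)-1) * c ^ k)) * (z*c)
            - ((n:ℂ)-(p:ℂ)) * c * (av n p j k * (z ^ (j-(p-k)) * c ^ k)))
      (R1_zero n p j z c) (R1_top n p j hj z c) (fun k hk => by exact R1_mid n p j k hj hk z c)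
  have hP : ∑ k ∈ Finset.range (p+1+1),
      ((p:ℂ)+1) * (av n (p+1) j k * (z ^ (j-(p+1-k)) * c ^ k))
        = ((p:ℂ)+1) * Sv n (p+1) j z := by
    rw [Sv_eq_av, Finset.mul_sum]
  have hQ : ∑ k ∈ Finset.range (p+1),
      (av n p j k * (((j-(p-k) : ℕ) : ℂ) * z ^ (j-(p-k)-1) * c ^ k)) = DSv n p j z :=
    (DSv_eq_av n p j z).symm
  have hR : ∑ k ∈ Finset.range (p+1),
      ((av n p j k * (((j-(p-k) : ℕ) : ℂ) * z ^ (j-(p-k)-1) * c ^ k)) * (z*c)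
        - ((n:ℂ)-(p:ℂ)) * c * (av n p j k * (z ^ (j-(p-k)) * c ^ k)))
      = DSv n p j z * (z*c) - ((n:ℂ)-(p:ℂ)) * c * Sv n p j z := by
    rw [Finset.sum_sub_distrib, ← Finset.sum_mul, ← Finset.mul_sum, ← Sv_eq_av,
      ← DSv_eq_av]
  rw [hP, hQ, hR] at key
  linear_combination key

lemma sum_shape2 {A B R : ℕ → ℂ} {p : ℕ} (h0 : A 0 = 0) (htop : B (p+1) = 0)
    (hmid : ∀ k, k < p+1 → A (k+1) + B k = R k) :
    ∑ k ∈ Finset.range (p+1+1), A k + ∑ k ∈ Finset.range (p+1+1), B k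
      = ∑ k ∈ Finset.range (p+1), R k := by
  rw [Finset.sum_range_succ' A (p+1), Finset.sum_range_succ B (p+1), h0, htop]
  have h : ∑ k ∈ Finset.range (p+1), A (k+1) + ∑ k ∈ Finset.range (p+1), B k
      = ∑ k ∈ Finset.range (p+1), R k := by
    rw [← Finset.sum_add_distrib]
    exact Finset.sum_congr rfl fun k hk => hmid k (Finset.mem_range.mp hk)
  linear_combination h

lemma R2_mid (n p j k : ℕ) (hj : j ≤ n) (hk : k < p+1) (z c : ℂ) :
    av n (p+1) j (k+1) * (z ^ (j-(p+1-(k+1))) * (((k:ℂ)+1) * c ^ k))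
      + ((z*c) * (av n (p+1) j k * (z ^ (j-(p+1-k)) * ((k:ℂ) * c ^ (k-1))))
          - ((p:ℂ)+1) * z * (av n (p+1) j k * (z ^ (j-(p+1-k)) * c ^ k)))
      = -((n:ℂ)-(p:ℂ)) * (av n p j k * (z ^ (j-(p-k)) * c ^ k)) := by
  have h1 : p + 1 - (k+1) = p - k := by omega
  simp only [av, h1]
  have hcc := hep k c
  have f2 := cast_choose_right (n-j) k
  have hs : (-1:ℂ)^(k+1) = -(-1:ℂ)^k := by rw [pow_succ]; ring
  rw [hs]
  rcases le_or_gt k (n-j) with hkm | hkm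
  · have hG : (((n-j) - k : ℕ) : ℂ) = (n:ℂ) - (j:ℂ) - (k:ℂ) := by
      rw [Nat.cast_sub hkm, Nat.cast_sub hj]
    rw [hG] at f2
    rcases le_or_gt (p+1-k) j with hkj | hkj
    · have hee : j - (p-k) = (j - (p+1-k)) + 1 := by omega
      have hpk : p + 1 - k = (p-k) + 1 := by omega
      have f1 := cast_choose_right j (p-k)
      rw [← hpk] at f1
      have hF : ((j - (p-k) : ℕ) : ℂ) = (j:ℂ) - (p:ℂ) + (k:ℂ) := by
        rw [Nat.cast_sub (by omega)]; push_cast [Nat.cast_sub (show k ≤ p by omega)]; ring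
      have hpkc : ((p - k : ℕ) : ℂ) = (p:ℂ) - (k:ℂ) := by
        rw [Nat.cast_sub (show k ≤ p by omega)]
      rw [hF, hpkc] at f1
      rw [hee, pow_succ]
      linear_combination (-(-1:ℂ)^k * ((n-j).choose k : ℂ) * z^(j-(p+1-k)) * z * c^k) * f1
        + (-(-1:ℂ)^k * ((j.choose (p-k)) : ℂ) * z^(j-(p+1-k)) * z * c^k) * f2
        + ((-1:ℂ)^k * ((n-j).choose k : ℂ) * ((j.choose (p+1-k)) : ℂ) * z^(j-(p+1-k)) * z) * hcc
    · have e1 : j.choose (p+1-k) = 0 := Nat.choose_eq_zero_of_lt hkj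
      rcases le_or_gt (p-k) j with hkj2 | hkj2
      · have hj2 : p - k = j := by omega
        have e2 : j.choose (p-k) = 1 := by rw [hj2, Nat.choose_self]
        have hP : (p:ℂ) = (j:ℂ) + (k:ℂ) := by
          have : p = j + k := by omega
          exact_mod_cast congrArg (Nat.cast : ℕ → ℂ) this
        rw [e1, e2, hP]
        linear_combination (-(-1:ℂ)^k * z^(j-(p-k)) * c^k) * f2
      · have e2 : j.choose (p-k) = 0 := Nat.choose_eq_zero_of_lt hkj2
        rw [e1, e2]
        push_cast
        ring
  · have e1 : (n-j).choose (k+1) = 0 := Nat.choose_eq_zero_of_lt (by omega)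
    have e2 : (n-j).choose k = 0 := Nat.choose_eq_zero_of_lt hkm
    rw [e1, e2]
    push_cast
    ring

lemma R2 (n p j : ℕ) (hj : j ≤ n) (z : ℂ) :
    (1 + z * (starRingEnd ℂ) z) * DbSv n (p+1) j z
      = ((p:ℂ)+1) * z * Sv n (p+1) j z - ((n:ℂ) - (p:ℂ)) * Sv n p j z := by
  set c := (starRingEnd ℂ) z with hc
  have h0 : av n (p+1) j 0 * (z ^ (j-(p+1-0)) * (((0:ℕ):ℂ) * c ^ (0-1))) = 0 := by
    simp
  have htop : (z*c) * (av n (p+1) j (p+1) * (z ^ (j-(p+1-(p+1))) * (((p+1:ℕ):ℂ) * c ^ (p+1-1))))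
      - ((p:ℂ)+1) * z * (av n (p+1) j (p+1) * (z ^ (j-(p+1-(p+1))) * c ^ (p+1))) = 0 := by
    simp only [Nat.sub_self, Nat.sub_zero, Nat.add_sub_cancel]
    push_cast
    ring
  have key := sum_shape2
      (A := fun k => av n (p+1) j k * (z ^ (j-(p+1-k)) * (((k:ℕ):ℂ) * c ^ (k-1))))
      (B := fun k => (z*c) * (av n (p+1) j k * (z ^ (j-(p+1-k)) * (((k:ℕ):ℂ) * c ^ (k-1))))
          - ((p:ℂ)+1) * z * (av n (p+1) j k * (z ^ (j-(p+1-k)) * c ^ k)))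
      (R := fun k => -((n:ℂ)-(p:ℂ)) * (av n p j k * (z ^ (j-(p-k)) * c ^ k)))
      h0 htop (fun k hk => by
        have := R2_mid n p j k hj hk z c
        push_cast
        push_cast at this
        linear_combination this)
  have hA : ∑ k ∈ Finset.range (p+1+1),
      av n (p+1) j k * (z ^ (j-(p+1-k)) * (((k:ℕ):ℂ) * c ^ (k-1))) = DbSv n (p+1) j z :=
    (DbSv_eq_av n (p+1) j z).symm
  have hB : ∑ k ∈ Finset.range (p+1+1),
      ((z*c) * (av n (p+1) j k * (z ^ (j-(p+1-k)) * (((k:ℕ):ℂ) * c ^ (k-1))))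
        - ((p:ℂ)+1) * z * (av n (p+1) j k * (z ^ (j-(p+1-k)) * c ^ k)))
      = (z*c) * DbSv n (p+1) j z - ((p:ℂ)+1) * z * Sv n (p+1) j z := by
    rw [Finset.sum_sub_distrib, ← Finset.mul_sum, ← Finset.mul_sum, ← Sv_eq_av,
      ← DbSv_eq_av]
  have hR : ∑ k ∈ Finset.range (p+1),
      (-((n:ℂ)-(p:ℂ)) * (av n p j k * (z ^ (j-(p-k)) * c ^ k)))
      = -((n:ℂ)-(p:ℂ)) * Sv n p j z := by
    rw [← Finset.mul_sum, ← Sv_eq_av]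
  rw [hA, hB, hR] at key
  linear_combination key
lemma wD_add {f g : ℂ → ℂ} {z : ℂ} (hf : DifferentiableAt ℝ f z) (hg : DifferentiableAt ℝ g z) :
    wD (fun w => f w + g w) z = wD f z + wD g z := by
  unfold wD
  rw [fderiv_fun_add hf hg]
  simp only [ContinuousLinearMap.add_apply]
  ring

lemma wD_const_mul (c : ℂ) {g : ℂ → ℂ} {z : ℂ} (hg : DifferentiableAt ℝ g z) :
    wD (fun w => c * g w) z = c * wD g z := by
  rw [wD_mul (differentiableAt_const c) hg, wD_const]
  ring

lemma diff_u (z : ℂ) : DifferentiableAt ℝ (fun w : ℂ => 1 + w * (starRingEnd ℂ) w) z :=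
  (differentiableAt_const 1).add (differentiableAt_fun_id.mul (diff_conj z))

lemma wD_u (z : ℂ) : wD (fun w : ℂ => 1 + w * (starRingEnd ℂ) w) z = (starRingEnd ℂ) z := by
  rw [wD_add (differentiableAt_const 1) (differentiableAt_fun_id.fun_mul (diff_conj z)), wD_const,
    wD_mul differentiableAt_fun_id (diff_conj z), wD_conj, wD_id]
  ring

lemma wDbar_u (z : ℂ) : wDbar (fun w : ℂ => 1 + w * (starRingEnd ℂ) w) z = z := by
  have h1 : wDbar (fun w : ℂ => 1 + w * (starRingEnd ℂ) w) z
      = wDbar (fun _ : ℂ => (1:ℂ)) z + wDbar (fun w : ℂ => w * (starRingEnd ℂ) w) z := by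
    unfold wDbar
    rw [fderiv_fun_add (differentiableAt_const 1) (differentiableAt_fun_id.fun_mul (diff_conj z))]
    simp only [ContinuousLinearMap.add_apply]
    ring
  rw [h1, wDbar_const, wDbar_mul differentiableAt_fun_id (diff_conj z), wDbar_conj, wDbar_id]
  ring

lemma wD_upow (m : ℕ) (z : ℂ) :
    wD (fun w : ℂ => (1 + w * (starRingEnd ℂ) w) ^ m) z
      = (m : ℂ) * (1 + z * (starRingEnd ℂ) z) ^ (m-1) * (starRingEnd ℂ) z := by
  have h := wD_comp (t := fun w : ℂ => 1 + w * (starRingEnd ℂ) w)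
    (hasDerivAt_pow m (1 + z * (starRingEnd ℂ) z)) (diff_u z)
  rw [wD_u] at h
  rw [h]

lemma diff_conj_Sv (n p j : ℕ) (z : ℂ) :
    DifferentiableAt ℝ (fun w => (starRingEnd ℂ) (Sv n p j w)) z :=
  (Complex.conjCLE.differentiable.differentiableAt).comp z (diff_Sv n p j z)

/-- the Gram sums -/
noncomputable def Mv (n q p : ℕ) (z : ℂ) : ℂ :=
  ∑ j : Fin (n+1), (n.choose j : ℂ) * ((starRingEnd ℂ) (Sv n q j z) * Sv n p j z)

noncomputable def Bv (n q p : ℕ) (z : ℂ) : ℂ :=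
  ∑ j : Fin (n+1), (n.choose j : ℂ) * ((starRingEnd ℂ) (Sv n q j z) * DSv n p j z)

noncomputable def Bbv (n q p : ℕ) (z : ℂ) : ℂ :=
  ∑ j : Fin (n+1), (n.choose j : ℂ) * ((starRingEnd ℂ) (DbSv n q j z) * Sv n p j z)

lemma wD_Mv (n q p : ℕ) (z : ℂ) : wD (Mv n q p) z = Bbv n q p z + Bv n q p z := by
  have h : wD (fun w => ∑ j : Fin (n+1),
        (n.choose (j:ℕ) : ℂ) * ((starRingEnd ℂ) (Sv n q j w) * Sv n p j w)) z
      = ∑ j : Fin (n+1), wD (fun w =>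
        (n.choose (j:ℕ) : ℂ) * ((starRingEnd ℂ) (Sv n q j w) * Sv n p j w)) z :=
    wD_sum (fun j _ => ((diff_conj_Sv n q j z).mul (diff_Sv n p j z)).const_mul _)
  unfold Mv Bv Bbv
  rw [h, ← Finset.sum_add_distrib]
  refine Finset.sum_congr rfl fun j _ => ?_
  rw [wD_const_mul _ ((diff_conj_Sv n q j z).fun_mul (diff_Sv n p j z)),
    wD_mul (diff_conj_Sv n q j z) (diff_Sv n p j z), wD_conj_comp (diff_Sv n q j z),
    wDbar_Sv, wD_Sv]
  ring

lemma Bbv_zero (n p : ℕ) (z : ℂ) : Bbv n 0 p z = 0 := by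
  unfold Bbv
  simp [DbSv_zero]

lemma Mv_conj (n q p : ℕ) (z : ℂ) : Mv n q p z = (starRingEnd ℂ) (Mv n p q z) := by
  unfold Mv
  rw [map_sum]
  refine Finset.sum_congr rfl fun j _ => ?_
  simp only [_root_.map_mul, Complex.conj_conj, map_natCast]
  ring

lemma Mv_base (n : ℕ) (z : ℂ) : Mv n 0 0 z = (1 + z * (starRingEnd ℂ) z) ^ n := by
  unfold Mv
  have h : ∀ j : Fin (n+1), (n.choose j : ℂ) * ((starRingEnd ℂ) (Sv n 0 j z) * Sv n 0 j z)
      = (z * (starRingEnd ℂ) z) ^ (j:ℕ) * 1 ^ (n - (j:ℕ)) * (n.choose (j:ℕ) : ℂ) := by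
    intro j
    rw [Sv_zero, map_pow]
    ring
  rw [Finset.sum_congr rfl (fun j _ => h j), Fin.sum_univ_eq_sum_range
    (fun j => (z * (starRingEnd ℂ) z) ^ j * 1 ^ (n - j) * (n.choose j : ℂ)), ← add_pow]
  ring_nf

lemma Mrec (n p q : ℕ) (z : ℂ) :
    ((p:ℂ)+1) * Mv n q (p+1) z
      = (1 + z * (starRingEnd ℂ) z) * Bv n q p z
        - ((n:ℂ) - (p:ℂ)) * (starRingEnd ℂ) z * Mv n q p z := by
  unfold Mv Bv
  rw [Finset.mul_sum, Finset.mul_sum, Finset.mul_sum, ← Finset.sum_sub_distrib]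
  refine Finset.sum_congr rfl fun j _ => ?_
  have hj : (j:ℕ) ≤ n := Nat.lt_succ_iff.mp j.isLt
  linear_combination ((n.choose j : ℂ) * (starRingEnd ℂ) (Sv n q j z)) * R1 n p j hj z

lemma Bbrec (n p q : ℕ) (z : ℂ) :
    (1 + z * (starRingEnd ℂ) z) * Bbv n (q+1) p z
      = ((q:ℂ)+1) * (starRingEnd ℂ) z * Mv n (q+1) p z - ((n:ℂ) - (q:ℂ)) * Mv n q p z := by
  unfold Mv Bbv
  rw [Finset.mul_sum, Finset.mul_sum, Finset.mul_sum, ← Finset.sum_sub_distrib]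
  refine Finset.sum_congr rfl fun j _ => ?_
  have hj : (j:ℕ) ≤ n := Nat.lt_succ_iff.mp j.isLt
  have h := congrArg (starRingEnd ℂ) (R2 n q j hj z)
  simp only [_root_.map_mul, map_add, map_sub, _root_.map_one, Complex.conj_conj, map_natCast] at h
  linear_combination ((n.choose j : ℂ) * Sv n p j z) * h
lemma u_ne_zero (z : ℂ) : (1 : ℂ) + z * (starRingEnd ℂ) z ≠ 0 := by
  have h : (1 : ℂ) + z * (starRingEnd ℂ) z = ((1 + Complex.normSq z : ℝ) : ℂ) := by
    rw [Complex.mul_conj]; push_cast; ring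
  rw [h]
  exact_mod_cast Complex.ofReal_ne_zero.mpr (by nlinarith [Complex.normSq_nonneg z])

lemma Mkey (n : ℕ) : ∀ p, p ≤ n →
    (∀ q, q < p → ∀ z : ℂ, Mv n q p z = 0) ∧
    (∀ z : ℂ, Mv n p p z = (n.choose p : ℂ) * (1 + z * (starRingEnd ℂ) z) ^ n) := by
  intro p
  induction p with
  | zero =>
    intro _
    exact ⟨fun q hq => absurd hq (Nat.not_lt_zero q),
      fun z => by rw [Mv_base]; simp⟩
  | succ p ih =>
    intro hp1
    have hp : p ≤ n := by omega
    obtain ⟨ih0, ih1⟩ := ih hp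
    have hn1 : 1 ≤ n := by omega
    have hpow : ∀ z : ℂ, (1 + z * (starRingEnd ℂ) z) ^ n
        = (1 + z * (starRingEnd ℂ) z) * (1 + z * (starRingEnd ℂ) z) ^ (n-1) := by
      intro z
      conv_lhs => rw [show n = (n-1)+1 from by omega]
      rw [pow_succ]
      ring
    -- Bv q p = 0 for q < p
    have hBq0 : ∀ q, q < p → ∀ z : ℂ, Bv n q p z = 0 := by
      intro q hq z
      have hM0 : Mv n q p = fun _ => (0:ℂ) := funext (ih0 q hq)
      have hw : wD (Mv n q p) z = 0 := by rw [hM0]; exact wD_const 0 z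
      rw [wD_Mv] at hw
      have hBb : Bbv n q p z = 0 := by
        cases q with
        | zero => exact Bbv_zero n p z
        | succ r =>
          have h := Bbrec n p r z
          rw [ih0 (r+1) hq z, ih0 r (by omega) z] at h
          have := mul_eq_zero.mp (by linear_combination h :
            (1 + z * (starRingEnd ℂ) z) * Bbv n (r+1) p z = 0)
          rcases this with h' | h'
          · exact absurd h' (u_ne_zero z)
          · exact h'
      rw [hBb] at hw
      linear_combination hw
    -- Bv p p value
    have hBpp : ∀ z : ℂ, Bv n p p z
        = (n.choose p : ℂ) * ((n:ℂ) - (p:ℂ)) * (starRingEnd ℂ) z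
          * (1 + z * (starRingEnd ℂ) z) ^ (n-1) := by
      intro z
      have hMp : Mv n p p = fun z => (n.choose p : ℂ) * (1 + z * (starRingEnd ℂ) z) ^ n :=
        funext ih1
      have hw : wD (Mv n p p) z
          = (n.choose p : ℂ) * ((n:ℂ) * (1 + z * (starRingEnd ℂ) z) ^ (n-1) * (starRingEnd ℂ) z) := by
        rw [hMp, wD_const_mul _ ((diff_u z).fun_pow n), wD_upow]
      rw [wD_Mv] at hw
      have hBb : Bbv n p p z
          = (p:ℂ) * (starRingEnd ℂ) z * (n.choose p : ℂ) * (1 + z * (starRingEnd ℂ) z) ^ (n-1) := by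
        cases p with
        | zero => rw [Bbv_zero]; ring
        | succ r =>
          have h := Bbrec n (r+1) r z
          rw [ih1 z, ih0 r (by omega) z, hpow z] at h
          push_cast at h ⊢
          apply mul_left_cancel₀ (u_ne_zero z)
          linear_combination h
      rw [hBb] at hw
      linear_combination hw
    constructor
    · -- orthogonality at p+1
      intro q hq z
      apply mul_left_cancel₀ (show ((p:ℂ)+1) ≠ 0 by exact_mod_cast Nat.succ_ne_zero p)
      rw [Mrec]
      rcases Nat.lt_succ_iff_lt_or_eq.mp hq with hq' | hq'
      · rw [hBq0 q hq' z, ih0 q hq' z]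
        ring
      · subst hq'
        rw [hBpp z, ih1 z, hpow z]
        ring
    · -- norm at p+1
      intro z
      have hM1 : Mv n p (p+1) z = 0 := by
        apply mul_left_cancel₀ (show ((p:ℂ)+1) ≠ 0 by exact_mod_cast Nat.succ_ne_zero p)
        rw [Mrec, hBpp z, ih1 z, hpow z]
        ring
      have hM1' : Mv n (p+1) p z = 0 := by
        rw [Mv_conj, hM1, map_zero]
      have hMfun : Mv n (p+1) p = fun _ => (0:ℂ) := by
        funext w
        rw [Mv_conj]
        have : Mv n p (p+1) w = 0 := by
          apply mul_left_cancel₀ (show ((p:ℂ)+1) ≠ 0 by exact_mod_cast Nat.succ_ne_zero p)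
          rw [Mrec, hBpp w, ih1 w, hpow w]
          ring
        rw [this, map_zero]
      have hw : wD (Mv n (p+1) p) z = 0 := by rw [hMfun]; exact wD_const 0 z
      rw [wD_Mv] at hw
      have hBb : Bbv n (p+1) p z
          = -((n:ℂ) - (p:ℂ)) * (n.choose p : ℂ) * (1 + z * (starRingEnd ℂ) z) ^ (n-1) := by
        have h := Bbrec n p p z
        rw [ih1 z, hM1', hpow z] at h
        apply mul_left_cancel₀ (u_ne_zero z)
        linear_combination h
      have hBv : Bv n (p+1) p z
          = ((n:ℂ) - (p:ℂ)) * (n.choose p : ℂ) * (1 + z * (starRingEnd ℂ) z) ^ (n-1) := by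
        rw [hBb] at hw
        linear_combination hw
      apply mul_left_cancel₀ (show ((p:ℂ)+1) ≠ 0 by exact_mod_cast Nat.succ_ne_zero p)
      rw [Mrec, hBv, hM1']
      have hcc : ((n.choose (p+1) : ℕ) : ℂ) * ((p:ℂ)+1) = (n.choose p : ℂ) * ((n:ℂ) - (p:ℂ)) := by
        have := cast_choose_right n p
        rw [Nat.cast_sub hp] at this
        exact this
      rw [hpow z]
      linear_combination (-(1 + z * (starRingEnd ℂ) z) * (1 + z * (starRingEnd ℂ) z)^(n-1)) * hcc
lemma huconj (z : ℂ) : (starRingEnd ℂ) (1 + z * (starRingEnd ℂ) z) = 1 + z * (starRingEnd ℂ) z := by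
  rw [map_add, _root_.map_one, _root_.map_mul, Complex.conj_conj]
  ring

lemma hasDeriv_invpow (p : ℕ) (v : ℂ) (hv : v ≠ 0) :
    HasDerivAt (fun w : ℂ => (w ^ p)⁻¹) (-((p:ℂ) * v ^ (p-1)) / (v ^ p) ^ 2) v :=
  (hasDerivAt_pow p v).inv (pow_ne_zero p hv)

lemma diff_ipow (p : ℕ) (z : ℂ) :
    DifferentiableAt ℝ (fun w : ℂ => ((1 + w * (starRingEnd ℂ) w) ^ p)⁻¹) z := by
  have h1 : DifferentiableAt ℝ (fun v : ℂ => (v ^ p)⁻¹) (1 + z * (starRingEnd ℂ) z) :=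
    ((hasDeriv_invpow p _ (u_ne_zero z)).differentiableAt).restrictScalars ℝ
  have h2 := h1.comp z (diff_u z)
  exact h2

lemma wD_ipow (p : ℕ) (z : ℂ) :
    wD (fun w : ℂ => ((1 + w * (starRingEnd ℂ) w) ^ p)⁻¹) z
      = -(p:ℂ) * (starRingEnd ℂ) z * ((1 + z * (starRingEnd ℂ) z) ^ (p+1))⁻¹ := by
  have h := wD_comp (t := fun w : ℂ => 1 + w * (starRingEnd ℂ) w)
    (hasDeriv_invpow p _ (u_ne_zero z)) (diff_u z)
  rw [wD_u] at h
  rw [h]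
  cases p with
  | zero => simp
  | succ r =>
    have hT := u_ne_zero z
    rw [show r + 1 - 1 = r from rfl]
    field_simp
    ring_nf

lemma Bv_diag (n p : ℕ) (hp : p ≤ n) (hn : 1 ≤ n) (z : ℂ) :
    Bv n p p z = (n.choose p : ℂ) * ((n:ℂ) - (p:ℂ)) * (starRingEnd ℂ) z
      * (1 + z * (starRingEnd ℂ) z) ^ (n-1) := by
  obtain ⟨ih0, ih1⟩ := Mkey n p hp
  have hpow : (1 + z * (starRingEnd ℂ) z) ^ n
      = (1 + z * (starRingEnd ℂ) z) * (1 + z * (starRingEnd ℂ) z) ^ (n-1) := by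
    conv_lhs => rw [show n = (n-1)+1 from by omega]
    rw [pow_succ]
    ring
  have hMp : Mv n p p = fun z => (n.choose p : ℂ) * (1 + z * (starRingEnd ℂ) z) ^ n :=
    funext ih1
  have hw : wD (Mv n p p) z
      = (n.choose p : ℂ) * ((n:ℂ) * (1 + z * (starRingEnd ℂ) z) ^ (n-1) * (starRingEnd ℂ) z) := by
    rw [hMp, wD_const_mul _ ((diff_u z).fun_pow n), wD_upow]
  rw [wD_Mv] at hw
  have hBb : Bbv n p p z
      = (p:ℂ) * (starRingEnd ℂ) z * (n.choose p : ℂ) * (1 + z * (starRingEnd ℂ) z) ^ (n-1) := by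
    cases p with
    | zero => rw [Bbv_zero]; ring
    | succ r =>
      have h := Bbrec n (r+1) r z
      rw [ih1 z, ih0 r (by omega) z, hpow] at h
      push_cast at h ⊢
      apply mul_left_cancel₀ (u_ne_zero z)
      linear_combination h
  rw [hBb] at hw
  linear_combination hw
/-- The Veronese map. -/
noncomputable def fV (n : ℕ) : ℂ → Fin (n+1) → ℂ :=
  fun w i => ((Real.sqrt ((n.choose (i:ℕ)) : ℝ)) : ℂ) * w ^ (i:ℕ)

lemma sqrt_sq (n m : ℕ) :
    ((Real.sqrt ((n.choose m : ℕ) : ℝ) : ℝ) : ℂ) * ((Real.sqrt ((n.choose m : ℕ) : ℝ) : ℝ) : ℂ)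
      = ((n.choose m : ℕ) : ℂ) := by
  rw [← Complex.ofReal_mul, Real.mul_self_sqrt (by positivity)]
  push_cast
  ring

lemma closed_form (n : ℕ) : ∀ p, p ≤ n → ∀ (z : ℂ) (j : Fin (n+1)),
    PpIter (fV n) p z j
      = ((Real.sqrt ((n.choose (j:ℕ)) : ℝ)) : ℂ) * (p.factorial : ℂ) * Sv n p j z
        * (((1 + z * (starRingEnd ℂ) z) ^ p)⁻¹) := by
  intro p
  induction p with
  | zero =>
    intro _ z j
    show fV n z j = _
    rw [Sv_zero]
    simp [fV]
  | succ p ih =>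
    intro hp z j
    have hp' : p ≤ n := by omega
    have IH := ih hp'
    have hgfun : ∀ i : Fin (n+1), (fun w => PpIter (fV n) p w i)
        = fun w => (((Real.sqrt ((n.choose (i:ℕ)) : ℝ)) : ℂ) * (p.factorial : ℂ))
            * (Sv n p i w * (((1 + w * (starRingEnd ℂ) w) ^ p)⁻¹)) := by
      intro i
      funext w
      rw [IH w i]
      ring
    have hwdv : ∀ i : Fin (n+1), wDV (PpIter (fV n) p) z i
        = ((Real.sqrt ((n.choose (i:ℕ)) : ℝ)) : ℂ) * (p.factorial : ℂ)
          * (DSv n p i z * (((1 + z * (starRingEnd ℂ) z) ^ p)⁻¹)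
             + Sv n p i z * (-(p:ℂ) * (starRingEnd ℂ) z
                * (((1 + z * (starRingEnd ℂ) z) ^ (p+1))⁻¹))) := by
      intro i
      show wD (fun w => PpIter (fV n) p w i) z = _
      rw [hgfun i, wD_const_mul _ ((diff_Sv n p i z).fun_mul (diff_ipow p z)),
        wD_mul (diff_Sv n p i z) (diff_ipow p z), wD_Sv, wD_ipow]
      ring
    have hconjh : ∀ i : Fin (n+1), (starRingEnd ℂ) (PpIter (fV n) p z i)
        = ((Real.sqrt ((n.choose (i:ℕ)) : ℝ)) : ℂ) * (p.factorial : ℂ)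
          * (starRingEnd ℂ) (Sv n p i z) * (((1 + z * (starRingEnd ℂ) z) ^ p)⁻¹) := by
      intro i
      rw [IH z i, _root_.map_mul, _root_.map_mul, _root_.map_mul, map_inv₀, map_pow, huconj,
        Complex.conj_ofReal, map_natCast]
    have hherm : herm (PpIter (fV n) p z) (PpIter (fV n) p z)
        = ((p.factorial : ℂ))^2 * ((((1 + z * (starRingEnd ℂ) z) ^ p)⁻¹)
            * (((1 + z * (starRingEnd ℂ) z) ^ p)⁻¹)) * Mv n p p z := by
      unfold herm Mv
      rw [Finset.mul_sum]
      refine Finset.sum_congr rfl fun i _ => ?_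
      rw [hconjh i, IH z i]
      linear_combination (((p.factorial : ℂ))^2 * ((((1 + z * (starRingEnd ℂ) z) ^ p)⁻¹)
        * (((1 + z * (starRingEnd ℂ) z) ^ p)⁻¹)) * ((starRingEnd ℂ) (Sv n p i z) * Sv n p i z))
        * sqrt_sq n i
    have hhermd : herm (PpIter (fV n) p z) (wDV (PpIter (fV n) p) z)
        = ((p.factorial : ℂ))^2 * (((((1 + z * (starRingEnd ℂ) z) ^ p)⁻¹)
              * (((1 + z * (starRingEnd ℂ) z) ^ p)⁻¹)) * Bv n p p z
            + ((((1 + z * (starRingEnd ℂ) z) ^ p)⁻¹) * (-(p:ℂ) * (starRingEnd ℂ) z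
                * (((1 + z * (starRingEnd ℂ) z) ^ (p+1))⁻¹))) * Mv n p p z) := by
      unfold herm Mv Bv
      simp only [Finset.mul_sum, ← Finset.sum_add_distrib]
      refine Finset.sum_congr rfl fun i _ => ?_
      rw [hconjh i, hwdv i]
      linear_combination (((p.factorial : ℂ))^2 * ((starRingEnd ℂ) (Sv n p i z))
          * ((((1 + z * (starRingEnd ℂ) z) ^ p)⁻¹) * (((1 + z * (starRingEnd ℂ) z) ^ p)⁻¹)
              * DSv n p i z
            + (((1 + z * (starRingEnd ℂ) z) ^ p)⁻¹) * (-(p:ℂ) * (starRingEnd ℂ) z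
                * (((1 + z * (starRingEnd ℂ) z) ^ (p+1))⁻¹)) * Sv n p i z)) * sqrt_sq n i
    have hT : (1 : ℂ) + z * (starRingEnd ℂ) z ≠ 0 := u_ne_zero z
    have hA : ((1 : ℂ) + z * (starRingEnd ℂ) z) ^ p ≠ 0 := pow_ne_zero _ hT
    have hA1 : ((1 : ℂ) + z * (starRingEnd ℂ) z) ^ (p+1) ≠ 0 := pow_ne_zero _ hT
    have hfac : (p.factorial : ℂ) ≠ 0 := Nat.cast_ne_zero.mpr p.factorial_ne_zero
    have hCnp : ((n.choose p : ℕ) : ℂ) ≠ 0 := Nat.cast_ne_zero.mpr (Nat.choose_pos hp').ne'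
    have hBn : ((1 : ℂ) + z * (starRingEnd ℂ) z) ^ n ≠ 0 := pow_ne_zero _ hT
    have hMval := (Mkey n p hp').2 z
    have hBval := Bv_diag n p hp' (by omega) z
    have hpow : ((1:ℂ) + z * (starRingEnd ℂ) z) ^ n
        = (1 + z * (starRingEnd ℂ) z) * (1 + z * (starRingEnd ℂ) z) ^ (n-1) := by
      conv_lhs => rw [show n = (n-1)+1 from by omega]
      rw [pow_succ]
      ring
    have hApow : ((1:ℂ) + z * (starRingEnd ℂ) z) ^ (p+1)
        = (1 + z * (starRingEnd ℂ) z) ^ p * (1 + z * (starRingEnd ℂ) z) := pow_succ _ _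
    have hquot : herm (PpIter (fV n) p z) (wDV (PpIter (fV n) p) z)
        / herm (PpIter (fV n) p z) (PpIter (fV n) p z)
        = ((n:ℂ) - 2*(p:ℂ)) * (starRingEnd ℂ) z * ((1 + z * (starRingEnd ℂ) z))⁻¹ := by
      rw [hherm, hhermd, hMval, hBval]
      rw [div_eq_iff (by
        rw [hpow]
        field_simp
        exact div_ne_zero (mul_ne_zero (mul_ne_zero (mul_ne_zero (pow_ne_zero _ hfac) hT) hCnp)
          (pow_ne_zero _ hT)) (pow_ne_zero _ hA))]
      field_simp
      rw [hpow, hApow]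
      ring
    show Pp (PpIter (fV n) p) z j = _
    unfold Pp
    rw [hquot, hwdv j, IH z j]
    have hfs : ((p+1).factorial : ℂ) = ((p:ℂ)+1) * (p.factorial : ℂ) := by
      rw [Nat.factorial_succ]
      push_cast
      ring
    rw [hfs]
    have hR1 := R1 n p j (Nat.lt_succ_iff.mp j.isLt) z
    rw [hApow, mul_inv]
    have hTT : (1 + z * (starRingEnd ℂ) z) * (1 + z * (starRingEnd ℂ) z)⁻¹ = 1 :=
      mul_inv_cancel₀ hT
    linear_combination (-(((Real.sqrt ((n.choose (j:ℕ)) : ℝ)) : ℂ)) * (p.factorial : ℂ)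
        * (((1 + z * (starRingEnd ℂ) z) ^ p)⁻¹) * ((1 + z * (starRingEnd ℂ) z))⁻¹) * hR1
      + (-(((Real.sqrt ((n.choose (j:ℕ)) : ℝ)) : ℂ)) * (p.factorial : ℂ)
        * (((1 + z * (starRingEnd ℂ) z) ^ p)⁻¹) * DSv n p j z) * hTT

lemma nsq_herm {m : ℕ} (a : Fin m → ℂ) : ((nsq a : ℝ) : ℂ) = herm a a := by
  unfold nsq herm
  push_cast
  refine Finset.sum_congr rfl fun i _ => ?_
  exact (Complex.mul_conj (a i)).symm.trans (mul_comm _ _)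

lemma herm_val (n k : ℕ) (hk : k ≤ n) (ζ : ℂ) :
    herm (PpIter (fV n) k ζ) (PpIter (fV n) k ζ)
      = ((k.factorial : ℂ))^2 * ((((1 + ζ * (starRingEnd ℂ) ζ) ^ k)⁻¹)
          * (((1 + ζ * (starRingEnd ℂ) ζ) ^ k)⁻¹)) * Mv n k k ζ := by
  have IH := closed_form n k hk
  have hconjh : ∀ i : Fin (n+1), (starRingEnd ℂ) (PpIter (fV n) k ζ i)
      = ((Real.sqrt ((n.choose (i:ℕ)) : ℝ)) : ℂ) * (k.factorial : ℂ)
        * (starRingEnd ℂ) (Sv n k i ζ) * (((1 + ζ * (starRingEnd ℂ) ζ) ^ k)⁻¹) := by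
    intro i
    rw [IH ζ i, _root_.map_mul, _root_.map_mul, _root_.map_mul, map_inv₀, map_pow, huconj,
      Complex.conj_ofReal, map_natCast]
  unfold herm Mv
  rw [Finset.mul_sum]
  refine Finset.sum_congr rfl fun i _ => ?_
  rw [hconjh i, IH ζ i]
  linear_combination (((k.factorial : ℂ))^2 * ((((1 + ζ * (starRingEnd ℂ) ζ) ^ k)⁻¹)
    * (((1 + ζ * (starRingEnd ℂ) ζ) ^ k)⁻¹)) * ((starRingEnd ℂ) (Sv n k i ζ) * Sv n k i ζ))
    * sqrt_sq n i


/-- For the Veronese map `f : ℂ → ℂ^N` (`N ≥ 2`) and `0 ≤ k ≤ N−1`,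
`|P₊^k f(ζ)|² = (k!)² C(N−1,k) (1 + |ζ|²)^{N−1−2k}`. -/
theorem stmt_12 (N : ℕ) (hN : 2 ≤ N) :
    ∀ k : ℕ, k ≤ N - 1 → ∀ ζ : ℂ,
      nsq (PpIter (fun z (j : Fin N) =>
          (Real.sqrt ((N - 1).choose (j : ℕ)) : ℂ) * z ^ (j : ℕ)) k ζ) =
        (Nat.factorial k : ℝ) ^ 2 * ((N - 1).choose k : ℝ) *
          (1 + Complex.normSq ζ) ^ ((N : ℤ) - 1 - 2 * k) := by
  obtain ⟨n, rfl⟩ : ∃ n, N = n + 1 := ⟨N - 1, by omega⟩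
  intro k hk ζ
  have hk' : k ≤ n := by omega
  have hfeq : (fun z (j : Fin (n+1)) =>
      (Real.sqrt (((n+1) - 1).choose (j : ℕ)) : ℂ) * z ^ (j : ℕ)) = fV n := by
    funext z j
    simp [fV]
  rw [hfeq]
  have hT : (1 : ℂ) + ζ * (starRingEnd ℂ) ζ ≠ 0 := u_ne_zero ζ
  have hTr : (1 + ((Complex.normSq ζ : ℝ) : ℂ)) = 1 + ζ * (starRingEnd ℂ) ζ := by
    rw [Complex.mul_conj]
  apply Complex.ofReal_injective
  rw [nsq_herm, herm_val n k hk' ζ, (Mkey n k hk').2 ζ]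
  have hzpow : (1 + ζ * (starRingEnd ℂ) ζ) ^ (((n+1) : ℤ) - 1 - 2 * k)
      = (1 + ζ * (starRingEnd ℂ) ζ) ^ n
        * ((((1 + ζ * (starRingEnd ℂ) ζ) ^ k)⁻¹) * (((1 + ζ * (starRingEnd ℂ) ζ) ^ k)⁻¹)) := by
    have h1 : ((n+1) : ℤ) - 1 - 2 * k = (n : ℤ) - ((2*k : ℕ) : ℤ) := by push_cast; ring
    rw [h1, zpow_sub₀ hT, zpow_natCast, zpow_natCast, two_mul, pow_add, div_eq_mul_inv, mul_inv]
  push_cast [Complex.ofReal_zpow]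
  rw [hTr, hzpow]
  ring
end

section
/- Let f : ℂ → ℂ³ be the Veronese map f(ζ) = (1, √2 ζ, ζ²). Then the projector P₁ = P(P₊f) is given explicitly, for every ζ ∈ ℂ, by P₁(ζ) = (1/(1 + |ζ|²)²) · M(ζ), where M(ζ) is the 3×3 matrix with rows (2|ζ|², −√2 ζ̄ (1 − |ζ|²), −2 ζ̄²), (−√2 ζ (1 − |ζ|²), (1 − |ζ|²)², √2 ζ̄ (1 − |ζ|²)), (−2 ζ², √2 ζ (1 − |ζ|²), 2|ζ|²). -/
open Complex Matrix

lemma wD_of_hasDerivAt {g : ℂ → ℂ} {g' z : ℂ} (h : HasDerivAt g g' z) : wD g z = g' := by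
  have hF : HasFDerivAt g ((ContinuousLinearMap.smulRight (1 : ℂ →L[ℂ] ℂ) g').restrictScalars ℝ) z :=
    h.hasFDerivAt.restrictScalars ℝ
  have := hF.fderiv
  simp only [wD, this]
  simp [ContinuousLinearMap.smulRight_apply, smul_eq_mul]
  ring_nf
  simp [Complex.I_sq]
  ring


set_option maxHeartbeats 1000000 in
/-- explicit form of the projector `P₁ = P(P₊f)` for the Veronese
map `f(ζ) = (1, √2 ζ, ζ²)`. -/
theorem stmt_16 :
    let f : ℂ → Fin 3 → ℂ := fun z => ![1, (Real.sqrt 2 : ℂ) * z, z ^ 2]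
    ∀ ζ : ℂ,
      proj (Pp f) ζ = (1 / ((1 + (Complex.normSq ζ : ℂ)) ^ 2)) •
        !![2 * (Complex.normSq ζ : ℂ),
             -((Real.sqrt 2 : ℂ) * (starRingEnd ℂ) ζ * (1 - (Complex.normSq ζ : ℂ))),
             -2 * ((starRingEnd ℂ) ζ) ^ 2;
           -((Real.sqrt 2 : ℂ) * ζ * (1 - (Complex.normSq ζ : ℂ))),
             (1 - (Complex.normSq ζ : ℂ)) ^ 2,
             (Real.sqrt 2 : ℂ) * (starRingEnd ℂ) ζ * (1 - (Complex.normSq ζ : ℂ));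
           -2 * ζ ^ 2,
             (Real.sqrt 2 : ℂ) * ζ * (1 - (Complex.normSq ζ : ℂ)),
             2 * (Complex.normSq ζ : ℂ)] := by
  intro f ζ
  have hcz : ((Complex.normSq ζ : ℝ) : ℂ) = (starRingEnd ℂ) ζ * ζ := by
    rw [Complex.normSq_eq_conj_mul_self]
  have hs2 : ((Real.sqrt 2 : ℝ) : ℂ) * ((Real.sqrt 2 : ℝ) : ℂ) = 2 := by
    rw [← Complex.ofReal_mul, Real.mul_self_sqrt (by norm_num : (0:ℝ) ≤ 2)]
    norm_num
  have h1c : (1 : ℂ) + (starRingEnd ℂ) ζ * ζ ≠ 0 := by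
    rw [← hcz]
    intro h
    have := congrArg Complex.re h
    simp at this
    nlinarith [Complex.normSq_nonneg ζ]
  have h1c' : (1 : ℂ) + ζ * (starRingEnd ℂ) ζ ≠ 0 := by rw [mul_comm]; exact h1c
  have hW : wDV f ζ = ![0, (Real.sqrt 2 : ℂ), 2 * ζ] := by
    funext i
    fin_cases i
    · exact wD_of_hasDerivAt (hasDerivAt_const ζ (1:ℂ))
    · simpa [wDV, f] using wD_of_hasDerivAt ((hasDerivAt_id ζ).const_mul ((Real.sqrt 2 : ℝ) : ℂ))
    · simpa [wDV, f] using wD_of_hasDerivAt (hasDerivAt_pow 2 ζ)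
  have hff : herm (f ζ) (f ζ) = (1 + (starRingEnd ℂ) ζ * ζ) ^ 2 := by
    simp only [herm, Fin.sum_univ_three, f]
    simp only [Matrix.cons_val_zero, Matrix.cons_val_one, Matrix.head_cons,
      Matrix.cons_val_two, Matrix.tail_cons, _root_.map_mul, map_pow, RingHom.map_one,
      Complex.conj_ofReal]
    linear_combination ((starRingEnd ℂ) ζ * ζ) * hs2
  have hfW : herm (f ζ) (wDV f ζ) = 2 * (starRingEnd ℂ) ζ * (1 + (starRingEnd ℂ) ζ * ζ) := by
    rw [hW]
    simp only [herm, Fin.sum_univ_three, f]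
    simp only [Matrix.cons_val_zero, Matrix.cons_val_one, Matrix.head_cons,
      Matrix.cons_val_two, Matrix.tail_cons, _root_.map_mul, map_pow, RingHom.map_one,
      Complex.conj_ofReal]
    linear_combination ((starRingEnd ℂ) ζ) * hs2
  have hV : Pp f ζ = ![-2 * (starRingEnd ℂ) ζ / (1 + (starRingEnd ℂ) ζ * ζ),
      (Real.sqrt 2 : ℂ) * (1 - (starRingEnd ℂ) ζ * ζ) / (1 + (starRingEnd ℂ) ζ * ζ),
      2 * ζ / (1 + (starRingEnd ℂ) ζ * ζ)] := by
    funext i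
    have : Pp f ζ i = wDV f ζ i - f ζ i * (herm (f ζ) (wDV f ζ) / herm (f ζ) (f ζ)) := rfl
    rw [this, hfW, hff, hW]
    fin_cases i <;>
      simp only [f, Matrix.cons_val_zero, Matrix.cons_val_one, Matrix.head_cons,
        Matrix.cons_val_two, Matrix.tail_cons, Fin.isValue, Fin.reduceFinMk] <;>
      field_simp <;> ring
  have hVV : herm (Pp f ζ) (Pp f ζ) = 2 := by
    rw [hV]
    simp only [herm, Fin.sum_univ_three, Matrix.cons_val_zero, Matrix.cons_val_one,
      Matrix.head_cons, Matrix.cons_val_two, Matrix.tail_cons, _root_.map_mul, map_div₀,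
      map_sub, map_add, RingHom.map_one, map_neg, map_ofNat, Complex.conj_conj, Complex.conj_ofReal]
    field_simp [h1c, h1c']
    ring_nf
    linear_combination ((1 - (starRingEnd ℂ) ζ * ζ) * (1 - ζ * (starRingEnd ℂ) ζ)) * hs2
  have hc2 : (starRingEnd ℂ) (2:ℂ) = 2 := map_ofNat _ 2
  ext i j
  rw [show proj (Pp f) ζ i j = Pp f ζ i * (starRingEnd ℂ) (Pp f ζ j) / herm (Pp f ζ) (Pp f ζ) from rfl,
    hVV, hV]
  fin_cases i <;> fin_cases j <;>
    simp only [Matrix.cons_val_zero, Matrix.cons_val_one, Matrix.head_cons,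
      Matrix.cons_val_two, Matrix.tail_cons, Matrix.smul_apply, Matrix.of_apply,
      Matrix.cons_val', Matrix.empty_val', Matrix.cons_val_fin_one, Fin.isValue, Fin.reduceFinMk,
      smul_eq_mul, _root_.map_mul, map_div₀, map_sub, map_add, RingHom.map_one, map_neg,
      map_ofNat, Complex.conj_conj, Complex.conj_ofReal, hcz, Matrix.vecHead] <;>
    field_simp <;> (try simp only [hc2]) <;>
    first
      | ring1
      | linear_combination (1 - 2 * ((starRingEnd ℂ) ζ * ζ) ^ 2 + ((starRingEnd ℂ) ζ * ζ) ^ 4) * hs2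
      | linear_combination (1 - (starRingEnd ℂ) ζ * ζ) ^ 2 * hs2
end
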